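/- Let a : Fin K → ℝ≥0 satisfy radial monotonicity with mode m, and let (l*, u*) be any minimizer of the interval length u − l over U(τ) = { (l,u) : ∑_{k=l}^u a_k ≥ τ, l ≤ m ≤ u } for feasible τ. Then the interval I_{L*(τ)} constructed from the L*(τ) closest indices to the mode is also a minimizer, i.e., the set of minimizers contains a 'centered' interval whose indices are exactly {m} ∪ {the u* − l* closest indices to m} for some tie-breaking. -/
import Mathlib


open Finset

/-- Distance between indices on the integer line. -/
def ndist {K : ℕ} (m k : Fin K) : ℕ := max m.val k.val - min m.val k.val

/-- Radial monotonicity: unique mode `m`, and values non-increasing in distance from `m`. -/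
def RadialMono {K : ℕ} (a : Fin K → ℝ) (m : Fin K) : Prop :=
  (∀ k : Fin K, k ≠ m → a k < a m) ∧
  ∀ k₁ k₂ : Fin K, ndist m k₁ ≤ ndist m k₂ → a k₂ ≤ a k₁

/-- `S` consists of `m` together with the `L` indices closest to `m`
(ties broken arbitrarily). -/
def IsClosest {K : ℕ} (m : Fin K) (L : ℕ) (S : Finset (Fin K)) : Prop :=
  m ∈ S ∧ S.card = L + 1 ∧ ∀ k ∈ S, ∀ k' ∉ S, ndist m k ≤ ndist m k'

/-- The set of the first `L+1` indices in a fixed enumeration `e`. -/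
def SL {K : ℕ} (e : Equiv.Perm (Fin K)) (L : ℕ) : Finset (Fin K) :=
  (Finset.univ.filter fun i : Fin K => i.val ≤ L).image e

/-- The enumeration `e` lists indices in non-decreasing distance from the mode `m`
(a fixed consistent tie-breaking). -/
def SortedByDist {K : ℕ} (m : Fin K) (e : Equiv.Perm (Fin K)) : Prop :=
  Monotone fun i => ndist m (e i)

theorem SL_nonempty {K : ℕ} (hK : 0 < K) (e : Equiv.Perm (Fin K)) (L : ℕ) :
    (SL e L).Nonempty :=
  ⟨e ⟨0, hK⟩, Finset.mem_image.mpr ⟨⟨0, hK⟩, by simp⟩⟩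

/-- The interval induced by `SL e L`: `[min S_L, max S_L]`. -/
def IL {K : ℕ} (hK : 0 < K) (e : Equiv.Perm (Fin K)) (L : ℕ) : Finset (Fin K) :=
  Finset.Icc ((SL e L).min' (SL_nonempty hK e L)) ((SL e L).max' (SL_nonempty hK e L))

/-- Minimal length of an anchor-containing interval with mass at least `τ`. -/
noncomputable def Lstar {K : ℕ} (a : Fin K → ℝ) (m : Fin K) (τ : ℝ) : ℕ :=
  sInf {L : ℕ | ∃ l u : Fin K, l ≤ m ∧ m ≤ u ∧ u.val - l.val = L ∧
    τ ≤ ∑ k ∈ Finset.Icc l u, a k}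

section helpers
variable {K : ℕ}

lemma ndist_eq_zero {m k : Fin K} (h : ndist m k = 0) : k = m := by
  unfold ndist at h
  have := m.isLt
  exact Fin.ext (by omega)

lemma mem_SL_iff {e : Equiv.Perm (Fin K)} {L : ℕ} {k : Fin K} :
    k ∈ SL e L ↔ (e.symm k).val ≤ L := by
  constructor
  · rintro hk
    obtain ⟨i, hi, rfl⟩ := Finset.mem_image.mp hk
    simpa using (Finset.mem_filter.mp hi).2
  · intro h
    exact Finset.mem_image.mpr ⟨e.symm k, Finset.mem_filter.mpr ⟨Finset.mem_univ _, h⟩, by simp⟩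

lemma mode_mem_SL {m : Fin K} {e : Equiv.Perm (Fin K)} (he : SortedByDist m e)
    (hK : 0 < K) (L : ℕ) : m ∈ SL e L := by
  rw [mem_SL_iff]
  have h0 : ndist m (e ⟨0, hK⟩) ≤ ndist m (e (e.symm m)) := he (show (⟨0, hK⟩ : Fin K) ≤ e.symm m from by rw [Fin.le_def]; exact Nat.zero_le _)
  rw [Equiv.apply_symm_apply] at h0
  have : ndist m m = 0 := by unfold ndist; omega
  rw [this, Nat.le_zero] at h0
  have : e.symm m = ⟨0, hK⟩ := by
    rw [← ndist_eq_zero h0]; simp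
  rw [this]
  exact Nat.zero_le L

/-- Anything strictly closer to `m` than an element of `SL e L` is in `SL e L`. -/
lemma closer_mem_SL {m : Fin K} {e : Equiv.Perm (Fin K)} (he : SortedByDist m e)
    {L : ℕ} {k k' : Fin K} (hk : k ∈ SL e L) (h : ndist m k' < ndist m k) :
    k' ∈ SL e L := by
  rw [mem_SL_iff] at hk ⊢
  by_contra hcon
  have : e.symm k ≤ e.symm k' := by
    rw [Fin.le_def]; omega
  have := he this
  simp only [Equiv.apply_symm_apply] at this
  omega

/-- Anything outside `SL e L` is at least as far from `m` as anything inside. -/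
lemma far_of_notMem_SL {m : Fin K} {e : Equiv.Perm (Fin K)} (he : SortedByDist m e)
    {L : ℕ} {k k' : Fin K} (hk : k ∈ SL e L) (hk' : k' ∉ SL e L) :
    ndist m k ≤ ndist m k' := by
  rw [mem_SL_iff] at hk hk'
  have : e.symm k ≤ e.symm k' := by rw [Fin.le_def]; omega
  have := he this
  simpa using this

lemma card_SL (e : Equiv.Perm (Fin K)) {L : ℕ} (hL : L < K) :
    (SL e L).card = L + 1 := by
  rw [SL, Finset.card_image_of_injective _ e.injective]
  have : (Finset.univ.filter fun i : Fin K => i.val ≤ L) = Finset.Iic ⟨L, hL⟩ := by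
    ext i
    simp [Fin.le_def]
  rw [this, Fin.card_Iic]

lemma sum_le_sum_SL {a : Fin K → ℝ} {m : Fin K} (ha : RadialMono a m)
    {e : Equiv.Perm (Fin K)} (he : SortedByDist m e) {L : ℕ} (hL : L < K)
    (T : Finset (Fin K)) (hT : T.card = L + 1) :
    ∑ k ∈ T, a k ≤ ∑ k ∈ SL e L, a k := by
  classical
  set S := SL e L with hS
  have hcard : (T \ S).card = (S \ T).card := by
    have h1 := Finset.card_inter_add_card_sdiff T S
    have h2 := Finset.card_inter_add_card_sdiff S T
    rw [Finset.inter_comm] at h2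
    rw [card_SL e hL] at h2
    omega
  have key : ∑ k ∈ T \ S, a k ≤ ∑ k ∈ S \ T, a k := by
    have hc : Fintype.card ↥(T \ S) = Fintype.card ↥(S \ T) := by
      simp only [Fintype.card_coe]; exact hcard
    let eqv := Fintype.equivOfCardEq hc
    have h1 : ∑ k ∈ T \ S, a k = ∑ i : ↥(T \ S), a i := (Finset.sum_coe_sort _ _).symm
    have h2 : ∑ k ∈ S \ T, a k = ∑ i : ↥(T \ S), a (eqv i) := by
      rw [← Finset.sum_coe_sort (S \ T) a]
      exact (Fintype.sum_equiv eqv _ _ fun i => rfl).symm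
    rw [h1, h2]
    apply Finset.sum_le_sum
    intro i _
    apply ha.2
    apply far_of_notMem_SL he (k := ((eqv i : ↥(S \ T)) : Fin K))
    · exact (Finset.mem_sdiff.mp (eqv i).2).1
    · exact (Finset.mem_sdiff.mp i.2).2
  calc ∑ k ∈ T, a k = ∑ k ∈ T ∩ S, a k + ∑ k ∈ T \ S, a k :=
        (Finset.sum_inter_add_sum_sdiff T S a).symm
    _ ≤ ∑ k ∈ T ∩ S, a k + ∑ k ∈ S \ T, a k := by linarith
    _ = ∑ k ∈ S ∩ T, a k + ∑ k ∈ S \ T, a k := by rw [Finset.inter_comm]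
    _ = ∑ k ∈ S, a k := Finset.sum_inter_add_sum_sdiff S T a

end helpers

theorem stmt15 {K : ℕ} (hK : 0 < K) (a : Fin K → ℝ) (m : Fin K) (ha : RadialMono a m)
    (hpos : ∀ k, 0 ≤ a k) (e : Equiv.Perm (Fin K)) (he : SortedByDist m e)
    (τ : ℝ) (l₀ u₀ : Fin K) (hl₀ : l₀ ≤ m) (hu₀ : m ≤ u₀)
    (hmass₀ : τ ≤ ∑ k ∈ Finset.Icc l₀ u₀, a k)
    (hmin : ∀ l u : Fin K, l ≤ m → m ≤ u → τ ≤ ∑ k ∈ Finset.Icc l u, a k →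
      u₀.val - l₀.val ≤ u.val - l.val) :
    (SL e (u₀.val - l₀.val)).min' (SL_nonempty hK e _) ≤ m ∧
    m ≤ (SL e (u₀.val - l₀.val)).max' (SL_nonempty hK e _) ∧
    τ ≤ ∑ k ∈ IL hK e (u₀.val - l₀.val), a k ∧
    ((SL e (u₀.val - l₀.val)).max' (SL_nonempty hK e _)).val -
      ((SL e (u₀.val - l₀.val)).min' (SL_nonempty hK e _)).val = u₀.val - l₀.val := by
  set L := u₀.val - l₀.val with hLdef
  have hL : L < K := by have := u₀.isLt; omega
  have hm : m ∈ SL e L := mode_mem_SL he hK L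
  set mn := (SL e L).min' (SL_nonempty hK e L) with hmn
  set mx := (SL e L).max' (SL_nonempty hK e L) with hmx
  have h1 : mn ≤ m := Finset.min'_le _ _ hm
  have h2 : m ≤ mx := Finset.le_max' _ _ hm
  have hmnS : mn ∈ SL e L := Finset.min'_mem _ _
  have hmxS : mx ∈ SL e L := Finset.max'_mem _ _
  -- the key structural fact: SL e L is exactly the interval [mn, mx]
  have hIcc : Finset.Icc mn mx = SL e L := by
    apply Finset.Subset.antisymm
    · intro k hk
      rw [Finset.mem_Icc] at hk
      obtain ⟨hk1, hk2⟩ := hk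
      rcases le_total k m with hkm | hkm
      · rcases eq_or_ne k mn with rfl | hne
        · exact hmnS
        · apply closer_mem_SL he hmnS
          have hlt : mn < k := lt_of_le_of_ne hk1 (Ne.symm hne)
          rw [Fin.lt_def] at hlt
          rw [Fin.le_def] at hkm hl₀ h1
          unfold ndist
          omega
      · rcases eq_or_ne k mx with rfl | hne
        · exact hmxS
        · apply closer_mem_SL he hmxS
          have hlt : k < mx := lt_of_le_of_ne hk2 hne
          rw [Fin.lt_def] at hlt
          rw [Fin.le_def] at hkm h2
          unfold ndist
          omega
    · intro k hk
      exact Finset.mem_Icc.mpr ⟨Finset.min'_le _ _ hk, Finset.le_max' _ _ hk⟩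
  have hcardSL : (SL e L).card = L + 1 := card_SL e hL
  have hlen : mx.val - mn.val = L := by
    have := hIcc ▸ hcardSL
    rw [Fin.card_Icc] at this
    have h12 : mn.val ≤ mx.val := h1.trans h2
    omega
  have hmass : τ ≤ ∑ k ∈ IL hK e L, a k := by
    have hTcard : (Finset.Icc l₀ u₀).card = L + 1 := by
      rw [Fin.card_Icc]
      have : l₀.val ≤ u₀.val := hl₀.trans hu₀
      omega
    have := sum_le_sum_SL ha he hL (Finset.Icc l₀ u₀) hTcard
    have hIL : IL hK e L = SL e L := hIcc
    rw [hIL]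
    linarith
  exact ⟨h1, h2, hmass, hlen⟩
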